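/- arXiv:2101.00765 — 3 statements merged into one kernel-verified Lean document; each statement's English description precedes it below -/
import Mathlib

section
/- Let V be a finite-dimensional real inner product space and A a finite multiset of vectors in V. Then the following are equivalent: (i) for every ξ ∈ V, the multiset of real numbers {⟨a, ξ⟩ : a ∈ A} (with multiplicity) is invariant under multiplication by −1; (ii) the multiset A is invariant under multiplication by −1. -/
/-!
A direction `ξ` that separates the finitely many points of `A` exists because a real vector
space is not a finite union of hyperplanes. Projection onto such a `ξ` is injective on the
points of `A` and of `-A`, so equality of the projected multisets forces `-A = A`.
-/

open scoped RealInnerProductSpace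

theorem LinearMap.exists_forall_apply_ne_zero {k E ι : Type*} [DivisionRing k] [Infinite k]
    [AddCommGroup E] [Module k E] [Finite ι] {f : ι → E →ₗ[k] k} (hf : ∀ i, f i ≠ 0) :
    ∃ x, ∀ i, f i x ≠ 0 := by
  by_contra! hcover
  have hunion : ⋃ i, ((LinearMap.ker (f i) : Subspace k E) : Set E) = Set.univ :=
    Set.eq_univ_of_forall fun x => Set.mem_iUnion.2 (hcover x)
  obtain ⟨i, hi⟩ := Subspace.exists_eq_top_of_iUnion_eq_univ hunion
  exact hf i (LinearMap.ker_eq_top.1 hi)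

theorem Multiset.eq_of_map_eq_of_injOn {α β : Type*} {s t : Multiset α} {f : α → β}
    (hf : Set.InjOn f {x | x ∈ s ∨ x ∈ t}) (h : s.map f = t.map f) : s = t := by
  rcases isEmpty_or_nonempty α with hα | hα
  · rw [Multiset.eq_zero_of_forall_notMem (s := s) isEmptyElim,
      Multiset.eq_zero_of_forall_notMem (s := t) isEmptyElim]
  have hinv := hf.leftInvOn_invFunOn
  calc s = s.map (Function.invFunOn f _ ∘ f) :=
        (Multiset.map_congr rfl fun x hx => hinv (Or.inl hx)).trans (Multiset.map_id' s) |>.symm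
    _ = t.map (Function.invFunOn f _ ∘ f) := by rw [← Multiset.map_map, h, Multiset.map_map]
    _ = t := (Multiset.map_congr rfl fun x hx => hinv (Or.inr hx)).trans (Multiset.map_id' t)

section InnerProductSpace

variable {V : Type*} [NormedAddCommGroup V] [InnerProductSpace ℝ V]

theorem exists_injOn_inner_right (S : Finset V) : ∃ ξ : V, Set.InjOn (⟪·, ξ⟫) S := by
  let f : {p : S × S // p.1 ≠ p.2} → V →ₗ[ℝ] ℝ := fun p => innerₛₗ ℝ (p.1.1 - p.1.2 : V)
  have hf : ∀ p, f p ≠ 0 := by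
    rintro ⟨⟨x, y⟩, hxy⟩ hzero
    have := LinearMap.congr_fun hzero ((x : V) - y)
    rw [innerₛₗ_apply_apply, LinearMap.zero_apply, inner_self_eq_zero, sub_eq_zero] at this
    exact hxy (Subtype.ext this)
  obtain ⟨ξ, hξ⟩ := LinearMap.exists_forall_apply_ne_zero hf
  refine ⟨ξ, fun x hx y hy hxy => ?_⟩
  by_contra hne
  apply hξ ⟨(⟨x, hx⟩, ⟨y, hy⟩), fun h => hne (congrArg Subtype.val h)⟩
  simpa [f, inner_sub_left, sub_eq_zero] using hxy

theorem Multiset.eq_of_forall_map_inner_eq {A B : Multiset V}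
    (h : ∀ ξ : V, A.map (⟪·, ξ⟫) = B.map (⟪·, ξ⟫)) : A = B := by
  classical
  obtain ⟨ξ, hξ⟩ := exists_injOn_inner_right (A + B).toFinset
  refine Multiset.eq_of_map_eq_of_injOn (hξ.mono fun x hx => ?_) (h ξ)
  simpa using hx

theorem Multiset.map_inner_map_neg (A : Multiset V) (ξ : V) :
    (A.map (fun a => -a)).map (⟪·, ξ⟫) = (A.map (⟪·, ξ⟫)).map (fun x => -x) := by
  simp only [Multiset.map_map, Function.comp_def, inner_neg_left]

end InnerProductSpace

theorem stmt0_general (V : Type*) [NormedAddCommGroup V] [InnerProductSpace ℝ V]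
    (A : Multiset V) :
    (∀ ξ : V, (A.map (fun a => ⟪a, ξ⟫)).map (fun x => -x) = A.map (fun a => ⟪a, ξ⟫)) ↔
      A.map (fun a => -a) = A := by
  simp only [← Multiset.map_inner_map_neg]
  exact ⟨Multiset.eq_of_forall_map_inner_eq, fun h ξ => by rw [h]⟩

theorem stmt0 (V : Type*) [NormedAddCommGroup V] [InnerProductSpace ℝ V]
    [FiniteDimensional ℝ V] (A : Multiset V) :
    (∀ ξ : V, (A.map (fun a => ⟪a, ξ⟫)).map (fun x => -x) = A.map (fun a => ⟪a, ξ⟫)) ↔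
      A.map (fun a => -a) = A :=
  stmt0_general V A
end

section
/- Suppose x ∈ (0, π/4) satisfies at least one of: cot x = tan x, cot x = tan(x + π/4), or cot x = 2 tan(2x). Then x = π/8 or (cot x)² = 5. (Note cot x = tan x has no solution in (0, π/4).) -/
open Real Set

namespace Real

theorem tan_lt_cot_of_mem_Ioo {x : ℝ} (hx : x ∈ Ioo 0 (π / 4)) : tan x < cot x := by
  have hpi := pi_pos
  have htan_pos : 0 < tan x := tan_pos_of_pos_of_lt_pi_div_two hx.1 (by linarith [hx.2])
  have htan_lt_one : tan x < 1 :=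
    tan_pi_div_four ▸ tan_lt_tan_of_nonneg_of_lt_pi_div_two hx.1.le (by linarith) hx.2
  rw [← tan_inv_eq_cot]
  exact htan_lt_one.trans (one_lt_inv₀ htan_pos |>.mpr htan_lt_one)

theorem add_eq_pi_div_two_of_cot_eq_tan {x y : ℝ} (hx : x ∈ Ioo 0 π)
    (hy : y ∈ Ioo (-(π / 2)) (π / 2)) (h : cot x = tan y) : x + y = π / 2 := by
  have hx' : π / 2 - x ∈ Ioo (-(π / 2)) (π / 2) := ⟨by linarith [hx.2], by linarith [hx.1]⟩
  have : π / 2 - x = y := injOn_tan hx' hy (by rw [tan_pi_div_two_sub, tan_inv_eq_cot, h])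
  linarith

theorem cot_sq_eq_five_of_cot_eq_two_mul_tan_two_mul {x : ℝ} (hx : tan x ≠ 0)
    (h : cot x = 2 * tan (2 * x)) : cot x ^ 2 = 5 := by
  rw [← tan_inv_eq_cot] at h ⊢
  rw [tan_two_mul] at h
  -- at `tan x ^ 2 = 1` the division makes `tan (2 * x)` vanish, while `cot x ≠ 0`
  have hden : 1 - tan x ^ 2 ≠ 0 := by
    intro h0
    rw [h0, div_zero, mul_zero] at h
    exact inv_ne_zero hx h
  have htan_sq : 5 * tan x ^ 2 = 1 := by
    field_simp at h
    linarith
  field_simp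
  linarith

end Real

theorem stmt13 (x : ℝ) (hx : x ∈ Set.Ioo 0 (Real.pi / 4))
    (h : Real.cot x = Real.tan x ∨ Real.cot x = Real.tan (x + Real.pi / 4) ∨
      Real.cot x = 2 * Real.tan (2 * x)) :
    x = Real.pi / 8 ∨ (Real.cot x) ^ 2 = 5 := by
  have hpi := pi_pos
  obtain ⟨hx0, hx4⟩ := hx
  rcases h with h | h | h
  · exact absurd h (tan_lt_cot_of_mem_Ioo ⟨hx0, hx4⟩).ne'
  · left
    have := add_eq_pi_div_two_of_cot_eq_tan ⟨hx0, by linarith⟩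
      ⟨by linarith, by linarith⟩ h
    linarith
  · right
    exact cot_sq_eq_five_of_cot_eq_two_mul_tan_two_mul
      (tan_pos_of_pos_of_lt_pi_div_two hx0 (by linarith)).ne' h
end

section
/- Let a be a real inner product space and let Σ⁺ = {e_s ± e_t : 1 ≤ s < t ≤ r} ∪ {e_s} ∪ {2e_s} be the positive roots of BC_r with respect to an orthonormal basis e₁,…,e_r. Fix 1 ≤ i ≤ r and let H = (π/4)(e₁ + ⋯ + e_i). Then the union Σ_{1,H} ∪ Σ_{−1,H} ∪ Σ_{−√−1,H}, given by {±(e_s − e_t) : s < t ≤ i} ∪ {±(e_s ± e_t) : i < s < t} ∪ {±e_s, ±2e_s : s > i} ∪ {±(e_s + e_t) : s < t ≤ i} ∪ {±e_s : s ≤ i}, is a root system in a isomorphic to B_i ⊕ BC_{r−i}. -/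
open scoped RealInnerProductSpace

/-- The standard basis vector `e s` of `ℝ^r`. -/
noncomputable def stdE (r : ℕ) (s : Fin r) : EuclideanSpace ℝ (Fin r) :=
  EuclideanSpace.single s 1

/-- The `B_i` part: `{±(e_s ± e_t) : s < t ≤ i} ∪ {±e_s : s ≤ i}` (1-based `i`). -/
def rootsB (r i : ℕ) : Set (EuclideanSpace ℝ (Fin r)) :=
  {v | ∃ s t : Fin r, s < t ∧ t.val < i ∧
    (v = stdE r s - stdE r t ∨ v = -(stdE r s - stdE r t) ∨
     v = stdE r s + stdE r t ∨ v = -(stdE r s + stdE r t))} ∪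
  {v | ∃ s : Fin r, s.val < i ∧ (v = stdE r s ∨ v = -(stdE r s))}

/-- The `BC_{r-i}` part in the last `r - i` coordinates. -/
def rootsBC (r i : ℕ) : Set (EuclideanSpace ℝ (Fin r)) :=
  {v | ∃ s t : Fin r, s < t ∧ i ≤ s.val ∧
    (v = stdE r s - stdE r t ∨ v = -(stdE r s - stdE r t) ∨
     v = stdE r s + stdE r t ∨ v = -(stdE r s + stdE r t))} ∪
  {v | ∃ s : Fin r, i ≤ s.val ∧
    (v = stdE r s ∨ v = -(stdE r s) ∨ v = (2 : ℝ) • stdE r s ∨ v = -((2 : ℝ) • stdE r s))}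

namespace Stmt15Aux
variable {r i : ℕ}

lemma inner_stdE_left (s : Fin r) (x : EuclideanSpace ℝ (Fin r)) :
    ⟪stdE r s, x⟫ = x s := by simp [stdE, EuclideanSpace.inner_single_left]

lemma inner_stdE_right (s : Fin r) (x : EuclideanSpace ℝ (Fin r)) :
    ⟪x, stdE r s⟫ = x s := by simp [stdE, EuclideanSpace.inner_single_right]

lemma stdE_apply (s u : Fin r) : stdE r s u = if u = s then 1 else 0 := by
  simp [stdE, EuclideanSpace.single_apply]

lemma inner_stdE_stdE (s t : Fin r) : ⟪stdE r s, stdE r t⟫ = if s = t then 1 else 0 := by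
  rw [inner_stdE_left, stdE_apply]

noncomputable def refl (α x : EuclideanSpace ℝ (Fin r)) : EuclideanSpace ℝ (Fin r) :=
  x - (2 * ⟪α, x⟫ / ⟪α, α⟫) • α

lemma refl_add (α x y : EuclideanSpace ℝ (Fin r)) :
    refl α (x + y) = refl α x + refl α y := by
  simp only [refl, inner_add_right]
  rw [show 2 * (⟪α,x⟫ + ⟪α,y⟫) / ⟪α,α⟫ = 2*⟪α,x⟫/⟪α,α⟫ + 2*⟪α,y⟫/⟪α,α⟫ by ring, add_smul]
  abel

lemma refl_smul (α x : EuclideanSpace ℝ (Fin r)) (c : ℝ) :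
    refl α (c • x) = c • refl α x := by
  simp only [refl, inner_smul_right, smul_sub, smul_smul]
  rw [show 2 * (c * ⟪α,x⟫) / ⟪α,α⟫ = c * (2*⟪α,x⟫/⟪α,α⟫) by ring]

lemma refl_neg (α x : EuclideanSpace ℝ (Fin r)) : refl α (-x) = - refl α x := by
  have := refl_smul α x (-1); simpa using this

lemma refl_sub (α x y : EuclideanSpace ℝ (Fin r)) :
    refl α (x - y) = refl α x - refl α y := by
  rw [sub_eq_add_neg, refl_add, refl_neg, sub_eq_add_neg]

lemma refl_neg_left (α x : EuclideanSpace ℝ (Fin r)) : refl (-α) x = refl α x := by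
  simp only [refl, inner_neg_left, inner_neg_right, neg_neg, smul_neg, neg_smul]
  rw [show 2 * -⟪α,x⟫ / ⟪α,α⟫ = -(2*⟪α,x⟫/⟪α,α⟫) by ring]
  simp

lemma refl_two_smul_left (α x : EuclideanSpace ℝ (Fin r)) :
    refl ((2:ℝ) • α) x = refl α x := by
  have key : ∀ a n : ℝ, 2*(2*a)/(2*(2*n))*2 = 2*a/n := by
    intro a n
    rcases eq_or_ne n 0 with rfl | h
    · simp
    · field_simp
  simp only [refl, real_inner_smul_left, real_inner_smul_right, smul_smul, key]


lemma refl_pair_sub (s t : Fin r) (h : s ≠ t) (u : Fin r) :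
    refl (stdE r s - stdE r t) (stdE r u) = stdE r (Equiv.swap s t u) := by
  rcases eq_or_ne u s with rfl | hus
  · rw [Equiv.swap_apply_left]
    simp only [refl, inner_sub_left, inner_sub_right, inner_stdE_stdE, if_pos rfl,
      if_neg h, if_neg h.symm]
    norm_num
  · rcases eq_or_ne u t with rfl | hut
    · rw [Equiv.swap_apply_right]
      simp only [refl, inner_sub_left, inner_sub_right, inner_stdE_stdE, if_pos rfl,
        if_neg h, if_neg h.symm]
      norm_num
    · rw [Equiv.swap_apply_of_ne_of_ne hus hut]
      simp only [refl, inner_sub_left, inner_sub_right, inner_stdE_stdE, if_pos rfl,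
        if_neg h, if_neg h.symm, if_neg hus.symm, if_neg hut.symm]
      norm_num

lemma refl_pair_add (s t : Fin r) (h : s ≠ t) (u : Fin r) :
    refl (stdE r s + stdE r t) (stdE r u)
      = (if u = s ∨ u = t then (-1:ℝ) else 1) • stdE r (Equiv.swap s t u) := by
  rcases eq_or_ne u s with rfl | hus
  · rw [Equiv.swap_apply_left, if_pos (Or.inl rfl)]
    simp only [refl, inner_add_left, inner_add_right, inner_stdE_stdE, if_pos rfl,
      if_neg h, if_neg h.symm]
    norm_num
  · rcases eq_or_ne u t with rfl | hut
    · rw [Equiv.swap_apply_right, if_pos (Or.inr rfl)]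
      simp only [refl, inner_add_left, inner_add_right, inner_stdE_stdE, if_pos rfl,
        if_neg h, if_neg h.symm]
      norm_num
    · rw [Equiv.swap_apply_of_ne_of_ne hus hut, if_neg (by tauto)]
      simp only [refl, inner_add_left, inner_add_right, inner_stdE_stdE, if_pos rfl,
        if_neg h, if_neg h.symm, if_neg hus.symm, if_neg hut.symm]
      norm_num

lemma refl_single (s u : Fin r) :
    refl (stdE r s) (stdE r u) = (if u = s then (-1:ℝ) else 1) • stdE r u := by
  rcases eq_or_ne u s with rfl | hus
  · simp only [refl, inner_stdE_stdE, if_pos rfl]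
    norm_num
    module
  · simp only [refl, inner_stdE_stdE, if_neg hus, if_neg hus.symm]
    norm_num


lemma pair_mem_B {a b : Fin r} (ha : a.val < i) (hb : b.val < i) (hab : a ≠ b)
    {e1 e2 : ℝ} (h1 : e1 = 1 ∨ e1 = -1) (h2 : e2 = 1 ∨ e2 = -1) :
    e1 • stdE r a + e2 • stdE r b ∈ rootsB r i := by
  rcases hab.lt_or_gt with hlt | hgt
  · left
    refine ⟨a, b, hlt, hb, ?_⟩
    rcases h1 with rfl|rfl <;> rcases h2 with rfl|rfl
    · right; right; left; module
    · left; module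
    · right; left; module
    · right; right; right; module
  · left
    refine ⟨b, a, hgt, ha, ?_⟩
    rcases h1 with rfl|rfl <;> rcases h2 with rfl|rfl
    · right; right; left; module
    · right; left; module
    · left; module
    · right; right; right; module

lemma pair_mem_BC {a b : Fin r} (ha : i ≤ a.val) (hb : i ≤ b.val) (hab : a ≠ b)
    {e1 e2 : ℝ} (h1 : e1 = 1 ∨ e1 = -1) (h2 : e2 = 1 ∨ e2 = -1) :
    e1 • stdE r a + e2 • stdE r b ∈ rootsBC r i := by
  rcases hab.lt_or_gt with hlt | hgt
  · left
    refine ⟨a, b, hlt, ha, ?_⟩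
    rcases h1 with rfl|rfl <;> rcases h2 with rfl|rfl
    · right; right; left; module
    · left; module
    · right; left; module
    · right; right; right; module
  · left
    refine ⟨b, a, hgt, hb, ?_⟩
    rcases h1 with rfl|rfl <;> rcases h2 with rfl|rfl
    · right; right; left; module
    · right; left; module
    · left; module
    · right; right; right; module

lemma single_mem_B {a : Fin r} (ha : a.val < i) {e : ℝ} (h : e = 1 ∨ e = -1) :
    e • stdE r a ∈ rootsB r i := by
  right
  refine ⟨a, ha, ?_⟩
  rcases h with rfl|rfl
  · left; module
  · right; module

lemma single_mem_BC {a : Fin r} (ha : i ≤ a.val) {e : ℝ} (h : e = 1 ∨ e = -1) :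
    e • stdE r a ∈ rootsBC r i := by
  right
  refine ⟨a, ha, ?_⟩
  rcases h with rfl|rfl
  · left; module
  · right; left; module

lemma double_mem_BC {a : Fin r} (ha : i ≤ a.val) {e : ℝ} (h : e = 1 ∨ e = -1) :
    e • ((2:ℝ) • stdE r a) ∈ rootsBC r i := by
  right
  refine ⟨a, ha, ?_⟩
  rcases h with rfl|rfl
  · right; right; left; module
  · right; right; right; module

section G
variable (f : EuclideanSpace ℝ (Fin r) → EuclideanSpace ℝ (Fin r))
  (σ : Equiv.Perm (Fin r)) (ε : Fin r → ℝ)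

lemma G_B (hadd : ∀ x y, f (x + y) = f x + f y) (hneg : ∀ x, f (-x) = -f x)
    (hε : ∀ u, ε u = 1 ∨ ε u = -1)
    (hf : ∀ u, f (stdE r u) = ε u • stdE r (σ u))
    (hσ : ∀ u : Fin r, (σ u).val < i ↔ u.val < i) :
    ∀ v ∈ rootsB r i, f v ∈ rootsB r i := by
  have hsub : ∀ x y, f (x - y) = f x - f y := fun x y => by
    rw [sub_eq_add_neg, hadd, hneg, sub_eq_add_neg]
  have hnegε : ∀ u, -ε u = 1 ∨ -ε u = -1 := fun u => by rcases hε u with h|h <;> simp [h]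
  rintro v (⟨s,t,hst,ht,H⟩|⟨s,hs,H⟩)
  · have hs : s.val < i := lt_trans (Fin.lt_def.mp hst) ht
    have hσs : (σ s).val < i := (hσ s).mpr hs
    have hσt : (σ t).val < i := (hσ t).mpr ht
    have hne : σ s ≠ σ t := fun h => (ne_of_lt hst) (σ.injective h)
    rcases H with rfl|rfl|rfl|rfl
    · rw [hsub, hf, hf,
        show ε s • stdE r (σ s) - ε t • stdE r (σ t)
          = ε s • stdE r (σ s) + (-ε t) • stdE r (σ t) by module]
      exact pair_mem_B hσs hσt hne (hε s) (hnegε t)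
    · rw [hneg, hsub, hf, hf,
        show -(ε s • stdE r (σ s) - ε t • stdE r (σ t))
          = (-ε s) • stdE r (σ s) + ε t • stdE r (σ t) by module]
      exact pair_mem_B hσs hσt hne (hnegε s) (hε t)
    · rw [hadd, hf, hf]
      exact pair_mem_B hσs hσt hne (hε s) (hε t)
    · rw [hneg, hadd, hf, hf,
        show -(ε s • stdE r (σ s) + ε t • stdE r (σ t))
          = (-ε s) • stdE r (σ s) + (-ε t) • stdE r (σ t) by module]
      exact pair_mem_B hσs hσt hne (hnegε s) (hnegε t)
  · rcases H with rfl|rfl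
    · rw [hf]
      exact single_mem_B ((hσ s).mpr hs) (hε s)
    · rw [hneg, hf, show -(ε s • stdE r (σ s)) = (-ε s) • stdE r (σ s) by module]
      exact single_mem_B ((hσ s).mpr hs) (hnegε s)

lemma G_BC (hadd : ∀ x y, f (x + y) = f x + f y) (hneg : ∀ x, f (-x) = -f x)
    (hsmul : ∀ (c : ℝ) x, f (c • x) = c • f x)
    (hε : ∀ u, ε u = 1 ∨ ε u = -1)
    (hf : ∀ u, f (stdE r u) = ε u • stdE r (σ u))
    (hσ : ∀ u : Fin r, (σ u).val < i ↔ u.val < i) :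
    ∀ v ∈ rootsBC r i, f v ∈ rootsBC r i := by
  have hsub : ∀ x y, f (x - y) = f x - f y := fun x y => by
    rw [sub_eq_add_neg, hadd, hneg, sub_eq_add_neg]
  have hnegε : ∀ u, -ε u = 1 ∨ -ε u = -1 := fun u => by rcases hε u with h|h <;> simp [h]
  have hσ' : ∀ u : Fin r, i ≤ (σ u).val ↔ i ≤ u.val := fun u => by
    rw [← Nat.not_lt, ← Nat.not_lt, hσ]
  rintro v (⟨s,t,hst,hs,H⟩|⟨s,hs,H⟩)
  · have ht : i ≤ t.val := le_trans hs (le_of_lt (Fin.lt_def.mp hst))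
    have hσs : i ≤ (σ s).val := (hσ' s).mpr hs
    have hσt : i ≤ (σ t).val := (hσ' t).mpr ht
    have hne : σ s ≠ σ t := fun h => (ne_of_lt hst) (σ.injective h)
    rcases H with rfl|rfl|rfl|rfl
    · rw [hsub, hf, hf,
        show ε s • stdE r (σ s) - ε t • stdE r (σ t)
          = ε s • stdE r (σ s) + (-ε t) • stdE r (σ t) by module]
      exact pair_mem_BC hσs hσt hne (hε s) (hnegε t)
    · rw [hneg, hsub, hf, hf,
        show -(ε s • stdE r (σ s) - ε t • stdE r (σ t))
          = (-ε s) • stdE r (σ s) + ε t • stdE r (σ t) by module]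
      exact pair_mem_BC hσs hσt hne (hnegε s) (hε t)
    · rw [hadd, hf, hf]
      exact pair_mem_BC hσs hσt hne (hε s) (hε t)
    · rw [hneg, hadd, hf, hf,
        show -(ε s • stdE r (σ s) + ε t • stdE r (σ t))
          = (-ε s) • stdE r (σ s) + (-ε t) • stdE r (σ t) by module]
      exact pair_mem_BC hσs hσt hne (hnegε s) (hnegε t)
  · have hσs : i ≤ (σ s).val := (hσ' s).mpr hs
    rcases H with rfl|rfl|rfl|rfl
    · rw [hf]
      exact single_mem_BC hσs (hε s)
    · rw [hneg, hf, show -(ε s • stdE r (σ s)) = (-ε s) • stdE r (σ s) by module]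
      exact single_mem_BC hσs (hnegε s)
    · rw [hsmul, hf, show (2:ℝ) • (ε s • stdE r (σ s)) = ε s • ((2:ℝ) • stdE r (σ s)) by module]
      exact double_mem_BC hσs (hε s)
    · rw [hneg, hsmul, hf,
        show -((2:ℝ) • (ε s • stdE r (σ s))) = (-ε s) • ((2:ℝ) • stdE r (σ s)) by module]
      exact double_mem_BC hσs (hnegε s)

end G


lemma swap_iff {s t : Fin r} (h : (s.val < i ↔ t.val < i)) (u : Fin r) :
    ((Equiv.swap s t) u).val < i ↔ u.val < i := by
  rcases eq_or_ne u s with rfl|hus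
  · rw [Equiv.swap_apply_left]; exact h.symm
  rcases eq_or_ne u t with rfl|hut
  · rw [Equiv.swap_apply_right]; exact h
  · rw [Equiv.swap_apply_of_ne_of_ne hus hut]

lemma exists_data (α : EuclideanSpace ℝ (Fin r)) (hα : α ∈ rootsB r i ∪ rootsBC r i) :
    ∃ (σ : Equiv.Perm (Fin r)) (ε : Fin r → ℝ),
      (∀ u, ε u = 1 ∨ ε u = -1) ∧ (∀ u, refl α (stdE r u) = ε u • stdE r (σ u)) ∧
      (∀ u : Fin r, (σ u).val < i ↔ u.val < i) := by
  have hif : ∀ s t : Fin r, (∀ u : Fin r, ((if u = s ∨ u = t then (-1:ℝ) else 1) = 1 ∨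
      (if u = s ∨ u = t then (-1:ℝ) else 1) = -1)) := by
    intro s t u; split_ifs <;> simp
  have hif1 : ∀ s : Fin r, (∀ u : Fin r, ((if u = s then (-1:ℝ) else 1) = 1 ∨
      (if u = s then (-1:ℝ) else 1) = -1)) := by
    intro s u; split_ifs <;> simp
  rcases hα with (⟨s,t,hst,ht,H⟩|⟨s,hs,H⟩)|(⟨s,t,hst,hs,H⟩|⟨s,hs,H⟩)
  · have hne : s ≠ t := ne_of_lt hst
    have hblock : s.val < i ↔ t.val < i :=
      iff_of_true (lt_trans (Fin.lt_def.mp hst) ht) ht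
    rcases H with rfl|rfl|rfl|rfl
    · exact ⟨Equiv.swap s t, fun _ => 1, fun u => Or.inl rfl,
        fun u => by rw [refl_pair_sub s t hne u, one_smul], swap_iff hblock⟩
    · exact ⟨Equiv.swap s t, fun _ => 1, fun u => Or.inl rfl,
        fun u => by rw [refl_neg_left, refl_pair_sub s t hne u, one_smul], swap_iff hblock⟩
    · exact ⟨Equiv.swap s t, fun u => if u = s ∨ u = t then -1 else 1, hif s t,
        fun u => by rw [refl_pair_add s t hne u], swap_iff hblock⟩
    · exact ⟨Equiv.swap s t, fun u => if u = s ∨ u = t then -1 else 1, hif s t,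
        fun u => by rw [refl_neg_left, refl_pair_add s t hne u], swap_iff hblock⟩
  · rcases H with rfl|rfl
    · exact ⟨Equiv.refl _, fun u => if u = s then -1 else 1, hif1 s,
        fun u => by rw [refl_single]; rfl, fun u => Iff.rfl⟩
    · exact ⟨Equiv.refl _, fun u => if u = s then -1 else 1, hif1 s,
        fun u => by rw [refl_neg_left, refl_single]; rfl, fun u => Iff.rfl⟩
  · have hne : s ≠ t := ne_of_lt hst
    have hblock : s.val < i ↔ t.val < i :=
      iff_of_false (Nat.not_lt.mpr hs)
        (Nat.not_lt.mpr (le_trans hs (le_of_lt (Fin.lt_def.mp hst))))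
    rcases H with rfl|rfl|rfl|rfl
    · exact ⟨Equiv.swap s t, fun _ => 1, fun u => Or.inl rfl,
        fun u => by rw [refl_pair_sub s t hne u, one_smul], swap_iff hblock⟩
    · exact ⟨Equiv.swap s t, fun _ => 1, fun u => Or.inl rfl,
        fun u => by rw [refl_neg_left, refl_pair_sub s t hne u, one_smul], swap_iff hblock⟩
    · exact ⟨Equiv.swap s t, fun u => if u = s ∨ u = t then -1 else 1, hif s t,
        fun u => by rw [refl_pair_add s t hne u], swap_iff hblock⟩
    · exact ⟨Equiv.swap s t, fun u => if u = s ∨ u = t then -1 else 1, hif s t,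
        fun u => by rw [refl_neg_left, refl_pair_add s t hne u], swap_iff hblock⟩
  · rcases H with rfl|rfl|rfl|rfl
    · exact ⟨Equiv.refl _, fun u => if u = s then -1 else 1, hif1 s,
        fun u => by rw [refl_single]; rfl, fun u => Iff.rfl⟩
    · exact ⟨Equiv.refl _, fun u => if u = s then -1 else 1, hif1 s,
        fun u => by rw [refl_neg_left, refl_single]; rfl, fun u => Iff.rfl⟩
    · exact ⟨Equiv.refl _, fun u => if u = s then -1 else 1, hif1 s,
        fun u => by rw [refl_two_smul_left, refl_single]; rfl, fun u => Iff.rfl⟩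
    · exact ⟨Equiv.refl _, fun u => if u = s then -1 else 1, hif1 s,
        fun u => by rw [refl_neg_left, refl_two_smul_left, refl_single]; rfl, fun u => Iff.rfl⟩

lemma closed : ∀ α ∈ rootsB r i ∪ rootsBC r i, ∀ β ∈ rootsB r i ∪ rootsBC r i,
    refl α β ∈ rootsB r i ∪ rootsBC r i := by
  intro α hα β hβ
  obtain ⟨σ, ε, hε, hf, hσ⟩ := exists_data α hα
  rcases hβ with hβ|hβ
  · exact Or.inl (G_B (refl α) σ ε (refl_add α) (refl_neg α) hε hf hσ β hβ)
  · exact Or.inr (G_BC (refl α) σ ε (refl_add α) (refl_neg α)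
      (fun c x => refl_smul α x c) hε hf hσ β hβ)


lemma supp_B : ∀ v ∈ rootsB r i, ∀ x : Fin r, i ≤ x.val → v x = 0 := by
  rintro v (⟨s,t,hst,ht,H⟩|⟨s,hs,H⟩) x hx
  · have hxs : x ≠ s := by
      intro h; subst h; exact absurd (lt_trans (Fin.lt_def.mp hst) ht) (Nat.not_lt.mpr hx)
    have hxt : x ≠ t := by
      intro h; subst h; exact absurd ht (Nat.not_lt.mpr hx)
    rcases H with rfl|rfl|rfl|rfl <;>
      simp [PiLp.sub_apply, PiLp.add_apply, PiLp.neg_apply, stdE_apply, hxs, hxt]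
  · have hxs : x ≠ s := by
      intro h; subst h; exact absurd hs (Nat.not_lt.mpr hx)
    rcases H with rfl|rfl <;> simp [PiLp.neg_apply, stdE_apply, hxs]

lemma supp_BC : ∀ v ∈ rootsBC r i, ∀ x : Fin r, x.val < i → v x = 0 := by
  rintro v (⟨s,t,hst,hs,H⟩|⟨s,hs,H⟩) x hx
  · have hxs : x ≠ s := by
      intro h; subst h; exact absurd hx (Nat.not_lt.mpr hs)
    have hxt : x ≠ t := by
      intro h; subst h
      exact absurd hx (Nat.not_lt.mpr (le_trans hs (le_of_lt (Fin.lt_def.mp hst))))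
    rcases H with rfl|rfl|rfl|rfl <;>
      simp [PiLp.sub_apply, PiLp.add_apply, PiLp.neg_apply, stdE_apply, hxs, hxt]
  · have hxs : x ≠ s := by
      intro h; subst h; exact absurd hx (Nat.not_lt.mpr hs)
    rcases H with rfl|rfl|rfl|rfl <;>
      simp [PiLp.neg_apply, PiLp.smul_apply, stdE_apply, hxs]

lemma ortho : ∀ u ∈ rootsB r i, ∀ v ∈ rootsBC r i, ⟪u, v⟫ = 0 := by
  intro u hu v hv
  rw [show ⟪u, v⟫ = ∑ x, u x * v x by simp [PiLp.inner_apply]; exact Finset.sum_congr rfl (fun _ _ => mul_comm _ _)]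
  apply Finset.sum_eq_zero
  intro x _
  rcases lt_or_ge x.val i with h|h
  · rw [supp_BC v hv x h, mul_zero]
  · rw [supp_B u hu x h, zero_mul]

lemma nonzero : ∀ α ∈ rootsB r i ∪ rootsBC r i, α ≠ 0 := by
  have key : ∀ v : EuclideanSpace ℝ (Fin r), ∀ x : Fin r, v x ≠ 0 → v ≠ 0 := by
    intro v x hvx h; exact hvx (by rw [h]; rfl)
  rintro α ((⟨s,t,hst,ht,H⟩|⟨s,hs,H⟩)|(⟨s,t,hst,hs,H⟩|⟨s,hs,H⟩)) <;>
    [skip; skip; skip; skip] <;>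
    first
    | (rcases H with rfl|rfl|rfl|rfl <;> refine key _ s ?_ <;>
        have hne : s ≠ t := ne_of_lt hst <;>
        simp [PiLp.sub_apply, PiLp.add_apply, PiLp.neg_apply, PiLp.smul_apply,
          stdE_apply, hne])
    | (rcases H with rfl|rfl|rfl|rfl <;> refine key _ s ?_ <;>
        simp [PiLp.neg_apply, PiLp.smul_apply, stdE_apply])
    | (rcases H with rfl|rfl <;> refine key _ s ?_ <;>
        simp [PiLp.neg_apply, stdE_apply])

lemma int_coord : ∀ β ∈ rootsB r i ∪ rootsBC r i, ∀ u : Fin r, ∃ m : ℤ, β u = (m : ℝ) := by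
  rintro β ((⟨s,t,hst,ht,H⟩|⟨s,hs,H⟩)|(⟨s,t,hst,hs,H⟩|⟨s,hs,H⟩)) u
  · rcases H with rfl|rfl|rfl|rfl <;>
      [refine ⟨(if u = s then 1 else 0) - (if u = t then 1 else 0), ?_⟩;
       refine ⟨-((if u = s then 1 else 0) - (if u = t then 1 else 0)), ?_⟩;
       refine ⟨(if u = s then 1 else 0) + (if u = t then 1 else 0), ?_⟩;
       refine ⟨-((if u = s then 1 else 0) + (if u = t then 1 else 0)), ?_⟩] <;>
      simp only [PiLp.sub_apply, PiLp.add_apply, PiLp.neg_apply, stdE_apply] <;>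
      split_ifs <;> norm_num
  · rcases H with rfl|rfl <;>
      [refine ⟨(if u = s then 1 else 0), ?_⟩;
       refine ⟨-(if u = s then 1 else 0), ?_⟩] <;>
      simp only [PiLp.neg_apply, stdE_apply] <;> split_ifs <;> norm_num
  · rcases H with rfl|rfl|rfl|rfl <;>
      [refine ⟨(if u = s then 1 else 0) - (if u = t then 1 else 0), ?_⟩;
       refine ⟨-((if u = s then 1 else 0) - (if u = t then 1 else 0)), ?_⟩;
       refine ⟨(if u = s then 1 else 0) + (if u = t then 1 else 0), ?_⟩;
       refine ⟨-((if u = s then 1 else 0) + (if u = t then 1 else 0)), ?_⟩] <;>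
      simp only [PiLp.sub_apply, PiLp.add_apply, PiLp.neg_apply, stdE_apply] <;>
      split_ifs <;> norm_num
  · rcases H with rfl|rfl|rfl|rfl <;>
      [refine ⟨(if u = s then 1 else 0), ?_⟩;
       refine ⟨-(if u = s then 1 else 0), ?_⟩;
       refine ⟨2 * (if u = s then 1 else 0), ?_⟩;
       refine ⟨-(2 * (if u = s then 1 else 0)), ?_⟩] <;>
      simp only [PiLp.neg_apply, PiLp.smul_apply, stdE_apply, smul_eq_mul] <;>
      split_ifs <;> norm_num


lemma cartan : ∀ α ∈ rootsB r i ∪ rootsBC r i, ∀ β ∈ rootsB r i ∪ rootsBC r i,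
    ∃ k : ℤ, 2 * ⟪α, β⟫ / ⟪α, α⟫ = (k : ℝ) := by
  intro α hα β hβ
  rcases hα with ((⟨s,t,hst,ht,H⟩|⟨s,hs,H⟩)|(⟨s,t,hst,hs,H⟩|⟨s,hs,H⟩))
  · have hne : s ≠ t := ne_of_lt hst
    obtain ⟨m, hm⟩ := int_coord β hβ s
    obtain ⟨n, hn⟩ := int_coord β hβ t
    rcases H with rfl|rfl|rfl|rfl
    · exact ⟨m - n, by
        simp [-inner_self_eq_norm_sq_to_K, inner_sub_left, inner_sub_right, inner_add_left, inner_add_right,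
          inner_neg_left, inner_neg_right, inner_stdE_left, stdE_apply, hm, hn,
          hne, hne.symm]
        <;> (push_cast; ring)⟩
    · exact ⟨n - m, by
        simp [-inner_self_eq_norm_sq_to_K, inner_sub_left, inner_sub_right, inner_add_left, inner_add_right,
          inner_neg_left, inner_neg_right, inner_stdE_left, stdE_apply, hm, hn,
          hne, hne.symm]
        <;> (push_cast; ring)⟩
    · exact ⟨m + n, by
        simp [-inner_self_eq_norm_sq_to_K, inner_sub_left, inner_sub_right, inner_add_left, inner_add_right,
          inner_neg_left, inner_neg_right, inner_stdE_left, stdE_apply, hm, hn,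
          hne, hne.symm]
        <;> (push_cast; ring)⟩
    · exact ⟨-(m + n), by
        simp [-inner_self_eq_norm_sq_to_K, inner_sub_left, inner_sub_right, inner_add_left, inner_add_right,
          inner_neg_left, inner_neg_right, inner_stdE_left, stdE_apply, hm, hn,
          hne, hne.symm]
        <;> (push_cast; ring)⟩
  · obtain ⟨m, hm⟩ := int_coord β hβ s
    rcases H with rfl|rfl
    · exact ⟨2 * m, by
        simp [-inner_self_eq_norm_sq_to_K, inner_neg_left, inner_neg_right, inner_stdE_left, stdE_apply, hm]
        <;> (push_cast; ring)⟩
    · exact ⟨-(2 * m), by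
        simp [-inner_self_eq_norm_sq_to_K, inner_neg_left, inner_neg_right, inner_stdE_left, stdE_apply, hm]
        <;> (push_cast; ring)⟩
  · have hne : s ≠ t := ne_of_lt hst
    obtain ⟨m, hm⟩ := int_coord β hβ s
    obtain ⟨n, hn⟩ := int_coord β hβ t
    rcases H with rfl|rfl|rfl|rfl
    · exact ⟨m - n, by
        simp [-inner_self_eq_norm_sq_to_K, inner_sub_left, inner_sub_right, inner_add_left, inner_add_right,
          inner_neg_left, inner_neg_right, inner_stdE_left, stdE_apply, hm, hn,
          hne, hne.symm]
        <;> (push_cast; ring)⟩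
    · exact ⟨n - m, by
        simp [-inner_self_eq_norm_sq_to_K, inner_sub_left, inner_sub_right, inner_add_left, inner_add_right,
          inner_neg_left, inner_neg_right, inner_stdE_left, stdE_apply, hm, hn,
          hne, hne.symm]
        <;> (push_cast; ring)⟩
    · exact ⟨m + n, by
        simp [-inner_self_eq_norm_sq_to_K, inner_sub_left, inner_sub_right, inner_add_left, inner_add_right,
          inner_neg_left, inner_neg_right, inner_stdE_left, stdE_apply, hm, hn,
          hne, hne.symm]
        <;> (push_cast; ring)⟩
    · exact ⟨-(m + n), by
        simp [-inner_self_eq_norm_sq_to_K, inner_sub_left, inner_sub_right, inner_add_left, inner_add_right,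
          inner_neg_left, inner_neg_right, inner_stdE_left, stdE_apply, hm, hn,
          hne, hne.symm]
        <;> (push_cast; ring)⟩
  · obtain ⟨m, hm⟩ := int_coord β hβ s
    rcases H with rfl|rfl|rfl|rfl
    · exact ⟨2 * m, by
        simp [-inner_self_eq_norm_sq_to_K, inner_neg_left, inner_neg_right, inner_stdE_left, stdE_apply, hm]
        <;> (push_cast; ring)⟩
    · exact ⟨-(2 * m), by
        simp [-inner_self_eq_norm_sq_to_K, inner_neg_left, inner_neg_right, inner_stdE_left, stdE_apply, hm]
        <;> (push_cast; ring)⟩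
    · exact ⟨m, by
        simp [-inner_self_eq_norm_sq_to_K, real_inner_smul_left, real_inner_smul_right, inner_neg_left,
          inner_neg_right, inner_stdE_left, stdE_apply, hm]
        <;> (push_cast; ring)⟩
    · exact ⟨-m, by
        simp [-inner_self_eq_norm_sq_to_K, real_inner_smul_left, real_inner_smul_right, inner_neg_left,
          inner_neg_right, inner_stdE_left, stdE_apply, hm]
        <;> (push_cast; ring)⟩

lemma span_top : Submodule.span ℝ (rootsB r i ∪ rootsBC r i) = ⊤ := by
  apply le_antisymm le_top
  rw [← (EuclideanSpace.basisFun (Fin r) ℝ).toBasis.span_eq]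
  apply Submodule.span_mono
  rintro x ⟨s, rfl⟩
  rw [OrthonormalBasis.coe_toBasis, EuclideanSpace.basisFun_apply]
  rcases lt_or_ge s.val i with h|h
  · exact Or.inl (Or.inr ⟨s, h, Or.inl rfl⟩)
  · exact Or.inr (Or.inr ⟨s, h, Or.inl rfl⟩)

end Stmt15Aux

/-- For `H = (π/4)(e₁ + ⋯ + e_i)`, the set `Σ̃_H` described in the paper is the
union of a `B_i` root system and a `BC_{r-i}` root system, mutually orthogonal;
it is a root system spanning `ℝ^r` (closed under its reflections, with integral
Cartan numbers). -/
theorem stmt15 (r i : ℕ) (hi1 : 1 ≤ i) (hir : i ≤ r) :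
    ∀ S : Set (EuclideanSpace ℝ (Fin r)), S = rootsB r i ∪ rootsBC r i →
      (∀ u ∈ rootsB r i, ∀ v ∈ rootsBC r i, ⟪u, v⟫ = 0) ∧
      (∀ α ∈ S, α ≠ 0) ∧
      (∀ α ∈ S, ∀ β ∈ S, β - (2 * ⟪α, β⟫ / ⟪α, α⟫) • α ∈ S) ∧
      (∀ α ∈ S, ∀ β ∈ S, ∃ k : ℤ, 2 * ⟪α, β⟫ / ⟪α, α⟫ = (k : ℝ)) ∧
      Submodule.span ℝ S = ⊤ := by
  intro S hS
  subst hS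
  exact ⟨Stmt15Aux.ortho, Stmt15Aux.nonzero,
    fun α hα β hβ => Stmt15Aux.closed α hα β hβ,
    Stmt15Aux.cartan, Stmt15Aux.span_top⟩
end
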